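/- arXiv:2405.00154 — 2 statements merged into one kernel-verified Lean document; each statement's English description precedes it below -/
import Mathlib

section
/- Consider the exponential-weights (online mirror descent) prediction-with-expert-advice algorithm with n experts over a time horizon T: the weights are initialized as w_i^1 = 1 for all i, and updated multiplicatively as w_i^{t+1} = w_i^t · exp(−μ · g_{t,i}), where g_t ∈ ℝ^n is the vector of expert losses at round t, and the algorithm plays the probability vector x_t ∈ ℝ^n with [x_t]_i = w_i^t / (∑_{j=1}^n w_j^t). If n ≥ 2, T ≥ 1, all losses satisfy 0 ≤ g_{t,i} ≤ 1, and the learning rate is μ = √(8·log(n)/T), then the regret satisfies ∑_{t=1}^T ⟨x_t, g_t⟩ − min_{1≤i≤n} ∑_{t=1}^T g_{t,i} ≤ 2·√(2·T·log n). -/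
/-!
Track the potential `Φₜ = ∑ᵢ wᵢᵗ`. The ratio `Φₜ₊₁ / Φₜ` is the `xₜ`-average of `e^{-μ gₜ,ᵢ}`, and
the second-order bound `e^{-a} ≤ 1 - a + a²/2` (for `a ≥ 0`) controls it by
`exp (-μ ⟨xₜ, gₜ⟩ + μ²/2)`. Hence `Φ_{T+1} ≤ n · exp (-μ L + T μ²/2)`, where `L` is the loss of the
algorithm, while `Φ_{T+1} ≥ w_i^{T+1} = exp (-μ Lᵢ)` for every expert `i`. Taking logarithms, the
regret is at most `log n / μ + T μ / 2`, which for `μ = √(8 log n / T)` is `(5/8) T μ ≤ 2 √(2 T log n)`.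
-/

open Finset Real

theorem exp_neg_le_one_sub_add_sq_div_two {a : ℝ} (ha : 0 ≤ a) :
    exp (-a) ≤ 1 - a + a ^ 2 / 2 := by
  -- `(1 - a + a²/2) (1 + a + a²/2) = 1 + a⁴/4`
  have key : 1 ≤ (1 - a + a ^ 2 / 2) * exp a := by
    nlinarith [quadratic_le_exp_of_nonneg ha, sq_nonneg (a ^ 2), sq_nonneg (a - 1)]
  calc exp (-a) = exp (-a) * 1 := (mul_one _).symm
    _ ≤ exp (-a) * ((1 - a + a ^ 2 / 2) * exp a) := by gcongr
    _ = 1 - a + a ^ 2 / 2 := by rw [mul_left_comm, ← exp_add, neg_add_cancel, exp_zero, mul_one]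

theorem sum_mul_exp_neg_mul_le {ι : Type*} [Fintype ι] {p ℓ : ι → ℝ} {μ : ℝ} (hμ : 0 ≤ μ)
    (hp : ∀ i, 0 ≤ p i) (hp1 : ∑ i, p i = 1) (hℓ : ∀ i, 0 ≤ ℓ i ∧ ℓ i ≤ 1) :
    ∑ i, p i * exp (-μ * ℓ i) ≤ exp (-μ * ∑ i, p i * ℓ i + μ ^ 2 / 2) := by
  calc ∑ i, p i * exp (-μ * ℓ i) ≤ ∑ i, p i * (1 - μ * ℓ i + μ ^ 2 / 2) := by
        gcongr with i
        · exact hp i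
        obtain ⟨h0, h1⟩ := hℓ i
        calc exp (-μ * ℓ i) = exp (-(μ * ℓ i)) := by ring_nf
          _ ≤ 1 - μ * ℓ i + (μ * ℓ i) ^ 2 / 2 :=
            exp_neg_le_one_sub_add_sq_div_two (mul_nonneg hμ h0)
          _ ≤ 1 - μ * ℓ i + μ ^ 2 / 2 := by gcongr; nlinarith
    _ = (1 + μ ^ 2 / 2) * ∑ i, p i - μ * ∑ i, p i * ℓ i := by
        rw [mul_sum, mul_sum, ← sum_sub_distrib]
        exact sum_congr rfl fun i _ ↦ by ring
    _ = -μ * ∑ i, p i * ℓ i + μ ^ 2 / 2 + 1 := by rw [hp1]; ring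
    _ ≤ _ := add_one_le_exp _

section ExpWeights

variable {ι : Type*} {μ : ℝ} {g w x : ℕ → ι → ℝ}

theorem exp_weights_eq (hw1 : ∀ i, w 1 i = 1)
    (hwrec : ∀ t, 1 ≤ t → ∀ i, w (t + 1) i = w t i * exp (-μ * g t i)) (t : ℕ) (i : ι) :
    w (t + 1) i = exp (-μ * ∑ s ∈ Icc 1 t, g s i) := by
  induction t with
  | zero => simp [hw1]
  | succ t ih =>
    rw [hwrec (t + 1) (by omega), ih, ← exp_add, sum_Icc_succ_top (by omega)]
    ring_nf

theorem exp_weights_pos (hw1 : ∀ i, w 1 i = 1)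
    (hwrec : ∀ t, 1 ≤ t → ∀ i, w (t + 1) i = w t i * exp (-μ * g t i)) {t : ℕ} (ht : 1 ≤ t)
    (i : ι) : 0 < w t i := by
  obtain ⟨s, rfl⟩ := Nat.exists_eq_add_of_le' ht
  rw [exp_weights_eq hw1 hwrec]
  exact exp_pos _

theorem sum_exp_weights_succ_le [Fintype ι] [Nonempty ι] (hμ : 0 ≤ μ) (hg : ∀ t i, 0 ≤ g t i ∧ g t i ≤ 1)
    (hw1 : ∀ i, w 1 i = 1)
    (hwrec : ∀ t, 1 ≤ t → ∀ i, w (t + 1) i = w t i * exp (-μ * g t i))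
    (hx : ∀ t i, x t i = w t i / ∑ j, w t j) {t : ℕ} (ht : 1 ≤ t) :
    ∑ i, w (t + 1) i ≤ (∑ i, w t i) * exp (-μ * ∑ i, x t i * g t i + μ ^ 2 / 2) := by
  have hW : 0 < ∑ i, w t i := sum_pos (fun i _ ↦ exp_weights_pos hw1 hwrec ht i) univ_nonempty
  have hx_nonneg (i : ι) : 0 ≤ x t i := by
    rw [hx]; exact div_nonneg (exp_weights_pos hw1 hwrec ht i).le hW.le
  have hx_sum : ∑ i, x t i = 1 := by simp only [hx, ← sum_div, div_self hW.ne']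
  calc ∑ i, w (t + 1) i = (∑ j, w t j) * ∑ i, x t i * exp (-μ * g t i) := by
        rw [mul_sum]
        refine sum_congr rfl fun i _ ↦ ?_
        rw [hwrec t ht, hx]
        field_simp
    _ ≤ _ := by gcongr; exact sum_mul_exp_neg_mul_le hμ hx_nonneg hx_sum (hg t)

theorem sum_exp_weights_le [Fintype ι] [Nonempty ι] (hμ : 0 ≤ μ) (hg : ∀ t i, 0 ≤ g t i ∧ g t i ≤ 1)
    (hw1 : ∀ i, w 1 i = 1)
    (hwrec : ∀ t, 1 ≤ t → ∀ i, w (t + 1) i = w t i * exp (-μ * g t i))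
    (hx : ∀ t i, x t i = w t i / ∑ j, w t j) (T : ℕ) :
    ∑ i, w (T + 1) i ≤
      Fintype.card ι * exp (-μ * ∑ t ∈ Icc 1 T, ∑ i, x t i * g t i + T * (μ ^ 2 / 2)) := by
  induction T with
  | zero => simp [hw1]
  | succ T ih =>
    calc ∑ i, w (T + 1 + 1) i
        ≤ (∑ i, w (T + 1) i) * exp (-μ * ∑ i, x (T + 1) i * g (T + 1) i + μ ^ 2 / 2) :=
          sum_exp_weights_succ_le hμ hg hw1 hwrec hx (by omega)
      _ ≤ Fintype.card ι * exp (-μ * ∑ t ∈ Icc 1 T, ∑ i, x t i * g t i + T * (μ ^ 2 / 2)) *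
            exp (-μ * ∑ i, x (T + 1) i * g (T + 1) i + μ ^ 2 / 2) := by gcongr
      _ = _ := by
        rw [mul_assoc, ← exp_add, sum_Icc_succ_top (by omega)]
        push_cast
        ring_nf

theorem exp_weights_regret_le [Fintype ι] (hμ : 0 < μ) (hg : ∀ t i, 0 ≤ g t i ∧ g t i ≤ 1)
    (hw1 : ∀ i, w 1 i = 1)
    (hwrec : ∀ t, 1 ≤ t → ∀ i, w (t + 1) i = w t i * exp (-μ * g t i))
    (hx : ∀ t i, x t i = w t i / ∑ j, w t j) (T : ℕ) (i : ι) :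
    ∑ t ∈ Icc 1 T, ∑ j, x t j * g t j - ∑ t ∈ Icc 1 T, g t i ≤
      log (Fintype.card ι) / μ + T * μ / 2 := by
  have : Nonempty ι := ⟨i⟩
  set S := ∑ t ∈ Icc 1 T, ∑ j, x t j * g t j
  have hlog : -μ * ∑ t ∈ Icc 1 T, g t i ≤ log (Fintype.card ι) + (-μ * S + T * (μ ^ 2 / 2)) := by
    rw [← exp_le_exp]
    calc exp (-μ * ∑ t ∈ Icc 1 T, g t i) = w (T + 1) i := (exp_weights_eq hw1 hwrec T i).symm
      _ ≤ ∑ j, w (T + 1) j :=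
        single_le_sum (fun j _ ↦ (exp_weights_pos hw1 hwrec (by omega) j).le) (mem_univ i)
      _ ≤ _ := sum_exp_weights_le hμ.le hg hw1 hwrec hx T
      _ = _ := by rw [exp_add (log _), exp_log (by exact_mod_cast Fintype.card_pos)]
  rw [← sub_nonneg]
  have : log (Fintype.card ι) / μ + T * μ / 2 - (S - ∑ t ∈ Icc 1 T, g t i) =
      (log (Fintype.card ι) + (-μ * S + T * (μ ^ 2 / 2)) + μ * ∑ t ∈ Icc 1 T, g t i) / μ := by
    field_simp
    ring
  rw [this]
  exact div_nonneg (by linarith) hμ.le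

end ExpWeights

/-- Regret bound for the exponential-weights (online mirror descent) algorithm
with `n` experts over horizon `T`, losses in `[0,1]`, and learning rate
`μ = √(8 log n / T)`: the regret is at most `2 √(2 T log n)`. -/
theorem exp_weights_regret
    (n T : ℕ) (hn : 2 ≤ n) (hT : 1 ≤ T)
    (g : ℕ → Fin n → ℝ)
    (hg : ∀ t i, 0 ≤ g t i ∧ g t i ≤ 1)
    (μ : ℝ) (hμ : μ = Real.sqrt (8 * Real.log n / T))
    (w : ℕ → Fin n → ℝ)
    (hw1 : ∀ i, w 1 i = 1)
    (hwrec : ∀ t, 1 ≤ t → ∀ i, w (t + 1) i = w t i * Real.exp (-μ * g t i))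
    (x : ℕ → Fin n → ℝ)
    (hx : ∀ t i, x t i = w t i / ∑ j, w t j) :
    (∑ t ∈ Finset.Icc 1 T, ∑ i, x t i * g t i) -
      Finset.univ.inf' ⟨(⟨0, by omega⟩ : Fin n), Finset.mem_univ _⟩
        (fun i => ∑ t ∈ Finset.Icc 1 T, g t i)
      ≤ 2 * Real.sqrt (2 * T * Real.log n) := by
  have hlog : 0 < log n := log_pos (by exact_mod_cast hn)
  have hT0 : (0 : ℝ) < T := by exact_mod_cast hT
  have hμ_pos : 0 < μ := hμ ▸ sqrt_pos.mpr (by positivity)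
  have hlog_eq : log n = T * μ ^ 2 / 8 := by
    rw [hμ, sq_sqrt (by positivity)]
    field_simp
  have hbound : 2 * sqrt (2 * T * log n) = T * μ := by
    rw [hlog_eq, show 2 * (T : ℝ) * (T * μ ^ 2 / 8) = (T * μ / 2) ^ 2 by ring,
      sqrt_sq (by positivity)]
    ring
  obtain ⟨i, -, hi⟩ := exists_mem_eq_inf' ⟨(⟨0, by omega⟩ : Fin n), mem_univ _⟩
    (fun i ↦ ∑ t ∈ Icc 1 T, g t i)
  have hregret := exp_weights_regret_le hμ_pos hg hw1 hwrec hx T i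
  rw [Fintype.card_fin, hlog_eq] at hregret
  rw [hi, hbound]
  calc _ ≤ T * μ ^ 2 / 8 / μ + T * μ / 2 := hregret
    _ ≤ T * μ := by
      rw [show (T : ℝ) * μ ^ 2 / 8 / μ = T * μ / 8 by field_simp]
      nlinarith
end

section
/- Let (Ω, 𝓕, ℙ) be a probability space, let the set of pages be a finite type I with |I| = P, and let q_1, q_2, … be an i.i.d. sequence of I-valued random variables with ℙ(q_1 = e) = p_e, where e ↦ p_e is injective and p_e > 0 for all e. Fix a linear order on I to break ties, let c > 0, let w_e(t) = c·|{s : 1 ≤ s ≤ t, q_s = e}|, fix a buffer size k with 2 ≤ k < P, and define the EEvA-T buffer process by: 𝓑_1 is an arbitrary fixed subset of I of size k, and for t ≥ 1, 𝓑_{t+1} = 𝓑_t if q_t ∈ 𝓑_t, and otherwise 𝓑_{t+1} = (𝓑_t \ {e_t}) ∪ {q_t} where e_t is the (tie-break-minimal) page of 𝓑_t minimizing w_·(t). Define the residual buffer 𝓑_t^{−1} = 𝓑_t \ {e_t} (the buffer minus its minimal-weight page), and let 𝓑_opt^{−1} be the set of the k−1 pages with the largest query probabilities. Then almost surely there exists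 T such that 𝓑_t^{−1} = 𝓑_opt^{−1} for all t ≥ T, i.e. lim_{t→∞} 𝓑_t^{−1} = 𝓑_opt^{−1}. (This is the paper's Theorem 2.) -/
open MeasureTheory ProbabilityTheory Filter Classical Finset Topology

/-!
By the strong law of large numbers `w_e(t) / t → c p_e` almost surely, so eventually every page of
`𝓑_opt^{-1}` outweighs every other page, and every page is requested infinitely often. From then on
the victim never lies in `𝓑_opt^{-1}`: otherwise every buffered page, weighing at least as much
as the victim, would lie in `𝓑_opt^{-1}`, which has only `k - 1` pages. Hence a page of
`𝓑_opt^{-1}` stays in the buffer from its next request on, and eventually `𝓑_t^{-1} = 𝓑_opt^{-1}`.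
-/

theorem sum_Icc_one_eq_sum_range {M : Type*} [AddCommMonoid M] (f : ℕ → M) (n : ℕ) :
    ∑ i ∈ Icc 1 n, f i = ∑ i ∈ range n, f (i + 1) := by
  rw [range_eq_Ico, sum_Ico_add', zero_add, ← Ico_succ_right_eq_Icc, Order.succ_eq_add_one]

theorem ae_tendsto_card_filter_mem_div {Ω α : Type*} [MeasurableSpace Ω] [MeasurableSpace α]
    {μ : Measure Ω} [IsFiniteMeasure μ] {q : ℕ → Ω → α} (hmeas : ∀ n, Measurable (q n))
    (hindep : Pairwise fun i j => IndepFun (q i) (q j) μ)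
    (hident : ∀ n, IdentDistrib (q n) (q 1) μ μ) {s : Set α} (hs : MeasurableSet s) :
    ∀ᵐ ω ∂μ, Tendsto (fun n : ℕ => (#{i ∈ Icc 1 n | q i ω ∈ s} : ℝ) / n) atTop
      (𝓝 (μ (q 1 ⁻¹' s)).toReal) := by
  set X : ℕ → Ω → ℝ := fun i => s.indicator 1 ∘ q (i + 1)
  have hind : Measurable (s.indicator (1 : α → ℝ)) := measurable_one.indicator hs
  have hX0 : X 0 = (q 1 ⁻¹' s).indicator 1 := funext fun ω => (Set.indicator_comp_right (q 1)).symm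
  have hpre : MeasurableSet (q 1 ⁻¹' s) := hmeas 1 hs
  have hlaw := strong_law_ae_real X (hX0 ▸ (integrable_const 1).indicator hpre)
    (fun i j hij => (hindep (by omega)).comp hind hind) (fun i => (hident (i + 1)).comp hind)
  rw [hX0, integral_indicator_one hpre, measureReal_def] at hlaw
  filter_upwards [hlaw] with ω hω
  convert hω using 3 with n
  rw [natCast_card_filter, sum_Icc_one_eq_sum_range]
  simp [X, Set.indicator_apply]

theorem eventually_lt_of_tendsto_div_natCast {u v : ℕ → ℝ} {a b : ℝ}
    (hu : Tendsto (fun n => u n / n) atTop (𝓝 a)) (hv : Tendsto (fun n => v n / n) atTop (𝓝 b))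
    (hab : b < a) : ∀ᶠ n in atTop, v n < u n := by
  filter_upwards [hv.eventually_lt hu hab, eventually_gt_atTop 0] with n hn hpos
  exact (div_lt_div_iff_of_pos_right (by exact_mod_cast hpos)).1 hn

theorem frequently_of_tendsto_card_filter_div {P : ℕ → Prop} [DecidablePred P] {a : ℝ}
    (h : Tendsto (fun n : ℕ => (#{i ∈ Icc 1 n | P i} : ℝ) / n) atTop (𝓝 a)) (ha : 0 < a) :
    ∃ᶠ i in atTop, P i := by
  by_contra hP
  obtain ⟨N, hN⟩ := (not_frequently.1 hP).exists_forall_of_atTop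
  have hcard : ∀ n, (#{i ∈ Icc 1 n | P i} : ℝ) ≤ N := by
    intro n
    have hsub : {i ∈ Icc 1 n | P i} ⊆ Icc 1 N := by
      intro i hi
      simp only [mem_filter, mem_Icc] at hi ⊢
      exact ⟨hi.1.1, not_lt.1 fun hNi => hN i hNi.le hi.2⟩
    exact_mod_cast (card_le_card hsub).trans (by simp)
  have hzero : Tendsto (fun n : ℕ => (#{i ∈ Icc 1 n | P i} : ℝ) / n) atTop (𝓝 0) :=
    squeeze_zero (fun n => by positivity)
      (fun n => div_le_div_of_nonneg_right (hcard n) n.cast_nonneg)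
      (tendsto_const_div_atTop_nhds_zero_nat (N : ℝ))
  exact ha.ne' (tendsto_nhds_unique h hzero)

theorem notMem_of_le_of_separated {I β : Type*} [Preorder β] {w : I → β} {A S : Finset I} {x : I}
    (hmin : ∀ e ∈ S, w x ≤ w e) (hsep : ∀ e ∈ A, ∀ e' ∉ A, w e' < w e)
    (hcard : #A < #S) : x ∉ A := by
  intro hxA
  have hSA : S ⊆ A := fun e he => by_contra fun heA => (hsep x hxA e heA).not_ge (hmin e he)
  exact (card_le_card hSA).not_gt hcard

def IsDemandPaging {I : Type*} [DecidableEq I] (B : ℕ → Finset I) (r v : ℕ → I) : Prop :=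
  ∀ t, 1 ≤ t → B (t + 1) = if r t ∈ B t then B t else insert (r t) ((B t).erase (v t))

namespace IsDemandPaging

variable {I : Type*} [DecidableEq I] {B : ℕ → Finset I} {r v : ℕ → I}

theorem card_eq (hB : IsDemandPaging B r v) {k : ℕ} (h1 : #(B 1) = k)
    (hv_mem : ∀ t, 1 ≤ t → v t ∈ B t) : ∀ t, 1 ≤ t → #(B t) = k := by
  intro t ht
  induction t, ht using Nat.le_induction with
  | base => exact h1
  | succ t ht ih =>
    rw [hB t ht]
    split_ifs with hr
    · exact ih
    · rw [card_insert_of_notMem fun h => hr (mem_of_mem_erase h), card_erase_of_mem (hv_mem t ht),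
        Nat.sub_add_cancel (ih ▸ card_pos.2 ⟨v t, hv_mem t ht⟩)]
      exact ih

theorem mem_succ_of_ne_victim (hB : IsDemandPaging B r v) {t : ℕ} (ht : 1 ≤ t) {e : I}
    (he : e ∈ B t) (hne : e ≠ v t) : e ∈ B (t + 1) := by
  rw [hB t ht]
  split_ifs
  · exact he
  · exact mem_insert_of_mem (mem_erase.2 ⟨hne, he⟩)

theorem request_mem_succ (hB : IsDemandPaging B r v) {t : ℕ} (ht : 1 ≤ t) : r t ∈ B (t + 1) := by
  rw [hB t ht]
  split_ifs with hr
  · exact hr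
  · exact mem_insert_self _ _

theorem eventually_mem_of_frequently_requested (hB : IsDemandPaging B r v) {e : I} {T₀ : ℕ}
    (hT₀ : 1 ≤ T₀) (hkeep : ∀ t ≥ T₀, e ≠ v t) (hreq : ∃ᶠ t in atTop, r t = e) :
    ∀ᶠ t in atTop, e ∈ B t := by
  obtain ⟨s, hs, hrs⟩ := frequently_atTop.1 hreq T₀
  refine eventually_atTop.2 ⟨s + 1, fun t ht => ?_⟩
  induction t, ht using Nat.le_induction with
  | base => exact hrs ▸ hB.request_mem_succ (hT₀.trans hs)
  | succ t ht ih => exact hB.mem_succ_of_ne_victim (by omega) ih (hkeep t (by omega))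

theorem eventually_erase_victim_eq (hB : IsDemandPaging B r v) {β : Type*} [Preorder β]
    {w : I → ℕ → β} {k : ℕ} (h1 : #(B 1) = k) (hv_mem : ∀ t, 1 ≤ t → v t ∈ B t)
    (hv_min : ∀ t, 1 ≤ t → ∀ e ∈ B t, w (v t) t ≤ w e t)
    {A : Finset I} (hA : #A = k - 1) (hsep : ∀ᶠ t in atTop, ∀ e ∈ A, ∀ e' ∉ A, w e' t < w e t)
    (hreq : ∀ e ∈ A, ∃ᶠ t in atTop, r t = e) :
    ∀ᶠ t in atTop, (B t).erase (v t) = A := by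
  have hcard := hB.card_eq h1 hv_mem
  obtain ⟨T₀, hT₀⟩ := (hsep.and (eventually_ge_atTop 1)).exists_forall_of_atTop
  have hvA : ∀ t ≥ T₀, v t ∉ A := by
    intro t ht
    obtain ⟨hsep_t, ht1⟩ := hT₀ t ht
    have hk : 0 < k := hcard t ht1 ▸ card_pos.2 ⟨v t, hv_mem t ht1⟩
    exact notMem_of_le_of_separated (hv_min t ht1) hsep_t (by rw [hA, hcard t ht1]; omega)
  have hAB : ∀ᶠ t in atTop, A ⊆ B t := (eventually_all_finset A).2 fun e he =>
    hB.eventually_mem_of_frequently_requested (hT₀ T₀ le_rfl).2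
      (fun t ht => he.ne_of_notMem (hvA t ht)) (hreq e he)
  filter_upwards [hAB, eventually_ge_atTop T₀] with t hAB ht
  have ht1 := (hT₀ t ht).2
  have hsub : A ⊆ (B t).erase (v t) := fun e he => mem_erase.2 ⟨he.ne_of_notMem (hvA t ht), hAB he⟩
  refine (eq_of_subset_of_card_le hsub ?_).symm
  rw [card_erase_of_mem (hv_mem t ht1), hcard t ht1, hA]

end IsDemandPaging

theorem eevaT_residual_buffer_converges_to_optimal_general
    {Ω : Type*} [MeasureSpace Ω] [IsProbabilityMeasure (ℙ : Measure Ω)]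
    {I : Type*} [Fintype I] [LinearOrder I]
    [MeasurableSpace I] [MeasurableSingletonClass I]
    (q : ℕ → Ω → I)
    (hmeas : ∀ n, Measurable (q n))
    (hindep : iIndepFun q ℙ)
    (hident : ∀ n, IdentDistrib (q n) (q 1) ℙ ℙ)
    (p : I → ℝ)
    (hp : ∀ e, (ℙ (q 1 ⁻¹' {e})).toReal = p e)
    (hpos : ∀ e, 0 < p e)
    (c : ℝ) (hc : 0 < c)
    (w : I → ℕ → Ω → ℝ)
    (hw : ∀ e t ω,
      w e t ω = c * ((Finset.Icc 1 t).filter (fun s => q s ω = e)).card)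
    (k : ℕ)
    (B0 : Finset I) (hB0 : B0.card = k)
    (B : ℕ → Ω → Finset I) (v : ℕ → Ω → I)
    (hB1 : ∀ ω, B 1 ω = B0)
    -- the victim `v t ω` is the tie-break-minimal page of `B t ω` minimizing `w · t ω`
    (hv_mem : ∀ t ω, 1 ≤ t → v t ω ∈ B t ω)
    (hv_min : ∀ t ω, 1 ≤ t → ∀ e ∈ B t ω, w (v t ω) t ω ≤ w e t ω)
    -- buffer recursion: keep the buffer on a hit, otherwise evict the victim
    (hBrec : ∀ t ω, 1 ≤ t →
      B (t + 1) ω =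
        if q t ω ∈ B t ω then B t ω
        else insert (q t ω) ((B t ω).erase (v t ω)))
    -- the optimal residual buffer: the `k - 1` pages of largest probability
    (Bopt : Finset I) (hBoptCard : Bopt.card = k - 1)
    (hBopt : ∀ e ∈ Bopt, ∀ e' ∉ Bopt, p e' < p e) :
    ∀ᵐ ω ∂ℙ, ∃ T : ℕ, ∀ t ≥ T, (B t ω).erase (v t ω) = Bopt := by
  have hfreq : ∀ᵐ ω, ∀ e, Tendsto (fun n : ℕ => (#{s ∈ Icc 1 n | q s ω = e} : ℝ) / n) atTop
      (𝓝 (p e)) := ae_all_iff.2 fun e => by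
    simpa [hp] using ae_tendsto_card_filter_mem_div hmeas (fun i j hij => hindep.indepFun hij)
      hident (measurableSet_singleton e)
  filter_upwards [hfreq] with ω hω
  have hweight : ∀ e, Tendsto (fun t : ℕ => w e t ω / t) atTop (𝓝 (c * p e)) := fun e => by
    simpa only [hw, mul_div_assoc] using (hω e).const_mul c
  have hsep : ∀ᶠ t in atTop, ∀ e ∈ Bopt, ∀ e' ∉ Bopt, w e' t ω < w e t ω :=
    (eventually_all_finset Bopt).2 fun e he => eventually_all.2 fun e' =>
      eventually_imp_distrib_left.2 fun he' => eventually_lt_of_tendsto_div_natCast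
        (hweight e) (hweight e') (mul_lt_mul_of_pos_left (hBopt e he e' he') hc)
  have hreq : ∀ e ∈ Bopt, ∃ᶠ t in atTop, q t ω = e := fun e _ =>
    frequently_of_tendsto_card_filter_div (hω e) (hpos e)
  have hB : IsDemandPaging (B · ω) (q · ω) (v · ω) := fun t => hBrec t ω
  exact eventually_atTop.1 (hB.eventually_erase_victim_eq (hB1 ω ▸ hB0) (fun t => hv_mem t ω)
    (fun t => hv_min t ω) hBoptCard hsep hreq)

/-- The paper's Theorem 2: for the EEvA-T buffer process driven by i.i.d. page
requests with injective positive query probabilities, the residual buffer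
`𝓑_t^{-1} = 𝓑_t \ {argmin-weight page}` almost surely converges (is eventually
equal) to the optimal residual buffer `𝓑_opt^{-1}`, the set of the `k - 1`
pages with the largest query probabilities. -/
theorem eevaT_residual_buffer_converges_to_optimal
    {Ω : Type*} [MeasureSpace Ω] [IsProbabilityMeasure (ℙ : Measure Ω)]
    {I : Type*} [Fintype I] [LinearOrder I]
    [MeasurableSpace I] [MeasurableSingletonClass I]
    (P : ℕ) (hP : Fintype.card I = P)
    (q : ℕ → Ω → I)
    (hmeas : ∀ n, Measurable (q n))
    (hindep : iIndepFun q ℙ)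
    (hident : ∀ n, IdentDistrib (q n) (q 1) ℙ ℙ)
    (p : I → ℝ)
    (hp : ∀ e, (ℙ (q 1 ⁻¹' {e})).toReal = p e)
    (hinj : Function.Injective p)
    (hpos : ∀ e, 0 < p e)
    (c : ℝ) (hc : 0 < c)
    (w : I → ℕ → Ω → ℝ)
    (hw : ∀ e t ω,
      w e t ω = c * ((Finset.Icc 1 t).filter (fun s => q s ω = e)).card)
    (k : ℕ) (hk1 : 2 ≤ k) (hkP : k < P)
    (B0 : Finset I) (hB0 : B0.card = k)
    (B : ℕ → Ω → Finset I) (v : ℕ → Ω → I)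
    (hB1 : ∀ ω, B 1 ω = B0)
    -- the victim `v t ω` is the tie-break-minimal page of `B t ω` minimizing `w · t ω`
    (hv_mem : ∀ t ω, 1 ≤ t → v t ω ∈ B t ω)
    (hv_min : ∀ t ω, 1 ≤ t → ∀ e ∈ B t ω, w (v t ω) t ω ≤ w e t ω)
    (hv_tie : ∀ t ω, 1 ≤ t → ∀ e ∈ B t ω, w e t ω = w (v t ω) t ω → v t ω ≤ e)
    -- buffer recursion: keep the buffer on a hit, otherwise evict the victim
    (hBrec : ∀ t ω, 1 ≤ t →
      B (t + 1) ω =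
        if q t ω ∈ B t ω then B t ω
        else insert (q t ω) ((B t ω).erase (v t ω)))
    -- the optimal residual buffer: the `k - 1` pages of largest probability
    (Bopt : Finset I) (hBoptCard : Bopt.card = k - 1)
    (hBopt : ∀ e ∈ Bopt, ∀ e' ∉ Bopt, p e' < p e) :
    ∀ᵐ ω ∂ℙ, ∃ T : ℕ, ∀ t ≥ T, (B t ω).erase (v t ω) = Bopt :=
  eevaT_residual_buffer_converges_to_optimal_general q hmeas hindep hident p hp hpos c hc w hw k B0
    hB0 B v hB1 hv_mem hv_min hBrec Bopt hBoptCard hBopt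
end
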